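/- For every α ∈ (0,1) there exists a constant c_α ∈ (0,∞), depending only on α, with the following property. Let (F,d) be a nonempty compact metric space, let (Ω,𝓕,P) be a probability space, and let (G(x))_{x∈F} be a family of real random variables on Ω such that for all x, y ∈ F the law of G(x) − G(y) is the Gaussian distribution on ℝ with mean 0 and variance d(x,y)² (a point mass at 0 when x = y). Then there exists a countable dense subset D of F such that, for every n ≥ 0, P( sup{ |G(x) − G(y)| : x,y ∈ D, d(x,y) < 2^{-n+1} } > c_α · 2^{-(1−α)n} ) ≤ Σ_{k≥n} (k+1)² · N_d(F, 2^{-k})² · exp( −2^{2α(k−3)} ). -/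

import Mathlib

/-!
Chaining. Let `Bₖ` be the union of minimal `2⁻ʲ`-nets for `j ≤ k`, so `#Bₖ ≤ (k + 1) N(F, 2⁻ᵏ)`,
and `D = ⋃ₖ Bₖ`. As `G a - G b` is a centred Gaussian of standard deviation `d(a, b)`, a union
bound over the pairs of `Bₖ` at distance `≤ 4 ⬝ 2⁻ᵏ` shows that one of their increments exceeds
`τₖ = 8 ⬝ 2^(-(1-α)k)` with probability at most the `k`-th summand. Off these events for all
`k ≥ n`, each `x ∈ D` is joined to `Bₙ` through its projections onto `Bₙ₊₁, Bₙ₊₂, …`, and summing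
the geometric series of the `τₖ` gives `|G x - G y| ≤ τₙ + 2 ∑_{k > n} τₖ = c_α 2^(-(1-α)n)` when
`d(x, y) < 2^(1-n)`.
-/

open MeasureTheory Filter Set ProbabilityTheory
open scoped ENNReal NNReal Topology

universe u v

/-- The metric entropy `N_d(K, ε)` of a subset `K` of a metric space: the minimal cardinality
of a finite subset `A ⊆ K` such that every point of `K` is within distance `ε` of `A`. -/
noncomputable def coveringNumber {S : Type*} [MetricSpace S] (K : Set S) (ε : ℝ) : ℕ :=
  sInf {n : ℕ | ∃ A : Finset S, ↑A ⊆ K ∧ A.card = n ∧ ∀ x ∈ K, ∃ a ∈ A, dist x a ≤ ε}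

section Covering

variable {S : Type*} [MetricSpace S] {K : Set S} {ε ε' : ℝ}

lemma IsCompact.exists_finset_card_eq_coveringNumber (hK : IsCompact K) (hε : 0 < ε) :
    ∃ A : Finset S, ↑A ⊆ K ∧ A.card = coveringNumber K ε ∧ ∀ x ∈ K, ∃ a ∈ A, dist x a ≤ ε := by
  obtain ⟨A, hAK, hcover⟩ := hK.elim_nhds_subcover (fun x => Metric.closedBall x ε)
    fun x _ => Metric.closedBall_mem_nhds x hε
  exact Nat.sInf_mem
    (s := {n | ∃ A : Finset S, ↑A ⊆ K ∧ A.card = n ∧ ∀ x ∈ K, ∃ a ∈ A, dist x a ≤ ε})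
    ⟨A.card, A, fun x hx => hAK x hx, rfl, fun x hx => by simpa using hcover hx⟩

lemma IsCompact.coveringNumber_anti (hK : IsCompact K) (hε : 0 < ε) (hεε' : ε ≤ ε') :
    coveringNumber K ε' ≤ coveringNumber K ε := by
  obtain ⟨A, hAK, hcard, hcover⟩ := hK.exists_finset_card_eq_coveringNumber hε
  exact Nat.sInf_le ⟨A, hAK, hcard, fun x hx =>
    (hcover x hx).imp fun _ ⟨ha, hxa⟩ => ⟨ha, hxa.trans hεε'⟩⟩

lemma exists_monotone_dyadic_nets (S : Type*) [MetricSpace S] [CompactSpace S] :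
    ∃ B : ℕ → Finset S, Monotone B ∧ (∀ k z, ∃ w ∈ B k, dist z w ≤ (2 : ℝ) ^ (-(k : ℤ))) ∧
      ∀ k, (B k).card ≤ (k + 1) * coveringNumber (Set.univ : Set S) ((2 : ℝ) ^ (-(k : ℤ))) := by
  classical
  choose A _ hAcard hA using fun k : ℕ =>
    isCompact_univ.exists_finset_card_eq_coveringNumber (S := S) (zpow_pos two_pos (-(k : ℤ)))
  refine ⟨fun k => (Finset.range (k + 1)).biUnion A, fun k l hkl => ?_, fun k z => ?_, fun k => ?_⟩
  · exact Finset.biUnion_subset_biUnion_of_subset_left _ (Finset.range_subset_range.mpr (by omega))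
  · obtain ⟨w, hw, hzw⟩ := hA k z (Set.mem_univ z)
    exact ⟨w, Finset.mem_biUnion.mpr ⟨k, by simp, hw⟩, hzw⟩
  · refine Finset.card_biUnion_le.trans <| (Finset.sum_le_card_nsmul _ _
      (coveringNumber Set.univ ((2 : ℝ) ^ (-(k : ℤ)))) fun m hm => ?_).trans_eq
      (by rw [Finset.card_range, smul_eq_mul])
    rw [hAcard]
    refine isCompact_univ.coveringNumber_anti (zpow_pos two_pos _)
      (zpow_le_zpow_right₀ one_le_two (neg_le_neg ?_))
    exact_mod_cast Finset.mem_range_succ_iff.mp hm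

end Covering

lemma two_rpow_neg_mul_natCast (β : ℝ) (n : ℕ) :
    (2 : ℝ) ^ (-(β * n)) = ((2 : ℝ) ^ (-β)) ^ n := by
  rw [← Real.rpow_natCast, ← Real.rpow_mul zero_le_two, neg_mul]

lemma mul_pow_add_two_mul_tsum_mul_pow {r : ℝ} (hr0 : 0 ≤ r) (hr1 : r < 1) (a : ℝ) (n : ℕ) :
    a * r ^ n + 2 * ∑' i, a * r ^ (n + i + 1) = a * (1 + r) / (1 - r) * r ^ n := by
  have hsum : ∑' i, a * r ^ (n + i + 1) = a * r ^ (n + 1) / (1 - r) := by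
    have hterm : ∀ i, a * r ^ (n + i + 1) = a * r ^ (n + 1) * r ^ i := fun i => by ring
    simp_rw [hterm]
    rw [tsum_mul_left, tsum_geometric_of_lt_one hr0 hr1, div_eq_mul_inv]
  rw [hsum]
  field_simp [(sub_pos.mpr hr1).ne']
  ring

lemma two_mul_exp_neg_le {X Z : ℝ} (hX : 1 ≤ X) (hZ : Z ≤ X ^ 2) :
    2 * Real.exp (-(2 * X ^ 2)) ≤ Real.exp (-Z) := by
  have htwo : 2 ≤ Real.exp (X ^ 2) := by
    linarith [Real.add_one_le_exp 1, Real.exp_le_exp.mpr (one_le_pow₀ hX : 1 ≤ X ^ 2)]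
  calc 2 * Real.exp (-(2 * X ^ 2)) ≤ Real.exp (X ^ 2) * Real.exp (-(2 * X ^ 2)) := by gcongr
    _ = Real.exp (-X ^ 2) := by rw [← Real.exp_add]; ring_nf
    _ ≤ Real.exp (-Z) := by gcongr

lemma two_mul_exp_neg_sq_div_le {α : ℝ} (hα : 0 ≤ α) (k : ℕ) :
    2 * Real.exp (-(8 * ((2 : ℝ) ^ (α - 1)) ^ k) ^ 2 / (2 * (4 * (2 : ℝ) ^ (-(k : ℤ))) ^ 2)) ≤
      Real.exp (-(2 : ℝ) ^ (2 * α * ((k : ℝ) - 3))) := by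
  set X : ℝ := (2 : ℝ) ^ (α * k)
  have hXk : ((2 : ℝ) ^ (α - 1)) ^ k = X * (2 : ℝ) ^ (-(k : ℤ)) := by
    rw [← Real.rpow_natCast, ← Real.rpow_mul zero_le_two,
      show (α - 1) * k = α * k + ((-(k : ℤ) : ℤ) : ℝ) by push_cast; ring,
      Real.rpow_add two_pos, Real.rpow_intCast]
  have hexponent : (8 * ((2 : ℝ) ^ (α - 1)) ^ k) ^ 2 / (2 * (4 * (2 : ℝ) ^ (-(k : ℤ))) ^ 2) =
      2 * X ^ 2 := by
    rw [hXk]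
    field_simp
    ring
  rw [neg_div, hexponent]
  refine two_mul_exp_neg_le (Real.one_le_rpow one_le_two (by positivity)) ?_
  rw [← Real.rpow_natCast, ← Real.rpow_mul zero_le_two]
  exact Real.rpow_le_rpow_of_exponent_le one_le_two (by push_cast; nlinarith)

section Chaining

variable {F : Type*} [PseudoMetricSpace F] {B : ℕ → Set F} {f : F → ℝ} {τ : ℕ → ℝ} {n : ℕ}

lemma dense_iUnion_of_dyadic_nets (hB : ∀ k z, ∃ w ∈ B k, dist z w ≤ (2 : ℝ) ^ (-(k : ℤ))) :
    Dense (⋃ k, B k) := by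
  rw [Metric.dense_iff]
  intro z ρ hρ
  obtain ⟨k, hk⟩ := exists_pow_lt_of_lt_one hρ (by norm_num : (2 : ℝ)⁻¹ < 1)
  obtain ⟨w, hwB, hzw⟩ := hB k z
  refine ⟨w, Metric.mem_ball'.mpr (hzw.trans_lt ?_), Set.mem_iUnion.mpr ⟨k, hwB⟩⟩
  rwa [zpow_neg, zpow_natCast, ← inv_pow]

lemma dist_le_four_mul_dyadic_succ {z a b : F} {k : ℕ}
    (ha : dist z a ≤ (2 : ℝ) ^ (-((k + 1 : ℕ) : ℤ))) (hb : dist z b ≤ (2 : ℝ) ^ (-(k : ℤ))) :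
    dist a b ≤ 4 * (2 : ℝ) ^ (-((k + 1 : ℕ) : ℤ)) := by
  have hdouble : (2 : ℝ) ^ (-(k : ℤ)) = 2 * (2 : ℝ) ^ (-((k + 1 : ℕ) : ℤ)) := by
    rw [Nat.cast_succ, neg_add, zpow_add₀ two_ne_zero, zpow_neg_one]
    ring
  have hpos : (0 : ℝ) < (2 : ℝ) ^ (-((k + 1 : ℕ) : ℤ)) := by positivity
  linarith [dist_triangle_left a b z]

lemma exists_mem_near_abs_sub_le_tsum (hB : Monotone B)
    (hnet : ∀ k z, ∃ w ∈ B k, dist z w ≤ (2 : ℝ) ^ (-(k : ℤ)))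
    (hτ : Summable τ) (hτ0 : 0 ≤ τ)
    (hf : ∀ k ≥ n, ∀ a ∈ B k, ∀ b ∈ B k, dist a b ≤ 4 * (2 : ℝ) ^ (-(k : ℤ)) → |f a - f b| ≤ τ k)
    {z : F} (hz : z ∈ ⋃ k, B k) :
    ∃ w ∈ B n, dist z w ≤ (2 : ℝ) ^ (-(n : ℤ)) ∧ |f z - f w| ≤ ∑' i, τ (n + i + 1) := by
  classical
  obtain ⟨m, hzm⟩ := Set.mem_iUnion.mp hz
  choose π hπB hπ using hnet
  set q : ℕ → F := fun k => if m ≤ k then z else π k z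
  have hqB : ∀ k, q k ∈ B k := fun k => by
    by_cases h : m ≤ k
    · simpa [q, h] using hB h hzm
    · simpa [q, h] using hπB k z
  have hq : ∀ k, dist z (q k) ≤ (2 : ℝ) ^ (-(k : ℤ)) := fun k => by
    by_cases h : m ≤ k
    · simp [q, h]
    · simpa [q, h] using hπ k z
  have hlink : ∀ i, |f (q (n + i + 1)) - f (q (n + i))| ≤ τ (n + i + 1) := fun i =>
    hf _ (by omega) _ (hqB _) _ (hB (Nat.le_succ _) (hqB _))
      (dist_le_four_mul_dyadic_succ (hq _) (hq _))
  refine ⟨q n, hqB n, hq n, ?_⟩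
  have htele : f z - f (q n) = ∑ i ∈ Finset.range m, (f (q (n + (i + 1))) - f (q (n + i))) := by
    rw [Finset.sum_range_sub (fun i => f (q (n + i))), add_zero]
    simp [q]
  calc |f z - f (q n)| ≤ ∑ i ∈ Finset.range m, |f (q (n + (i + 1))) - f (q (n + i))| := by
        rw [htele]; exact Finset.abs_sum_le_sum_abs _ _
    _ ≤ ∑ i ∈ Finset.range m, τ (n + i + 1) := Finset.sum_le_sum fun i _ => hlink i
    _ ≤ ∑' i, τ (n + i + 1) :=
        (hτ.comp_injective fun i j h => by omega).sum_le_tsum _ fun i _ => hτ0 _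

lemma abs_sub_le_of_dist_lt_dyadic (hB : Monotone B)
    (hnet : ∀ k z, ∃ w ∈ B k, dist z w ≤ (2 : ℝ) ^ (-(k : ℤ)))
    (hτ : Summable τ) (hτ0 : 0 ≤ τ)
    (hf : ∀ k ≥ n, ∀ a ∈ B k, ∀ b ∈ B k, dist a b ≤ 4 * (2 : ℝ) ^ (-(k : ℤ)) → |f a - f b| ≤ τ k)
    {x y : F} (hx : x ∈ ⋃ k, B k) (hy : y ∈ ⋃ k, B k)
    (hxy : dist x y < (2 : ℝ) ^ (1 - (n : ℤ))) :
    |f x - f y| ≤ τ n + 2 * ∑' i, τ (n + i + 1) := by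
  obtain ⟨v, hvB, hxv, hfxv⟩ := exists_mem_near_abs_sub_le_tsum hB hnet hτ hτ0 hf hx
  obtain ⟨w, hwB, hyw, hfyw⟩ := exists_mem_near_abs_sub_le_tsum hB hnet hτ hτ0 hf hy
  have hvw : dist v w ≤ 4 * (2 : ℝ) ^ (-(n : ℤ)) := by
    have h2n : (2 : ℝ) ^ (1 - (n : ℤ)) = 2 * (2 : ℝ) ^ (-(n : ℤ)) := by
      rw [sub_eq_add_neg, zpow_add₀ two_ne_zero, zpow_one]
    linarith [dist_triangle4 v x y w, dist_comm v x]
  have hfvw := hf n le_rfl v hvB w hwB hvw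
  calc |f x - f y| ≤ |f x - f v| + |f v - f w| + |f w - f y| := by
        linarith [abs_sub_le (f x) (f v) (f y), abs_sub_le (f v) (f w) (f y)]
    _ ≤ τ n + 2 * ∑' i, τ (n + i + 1) := by rw [abs_sub_comm (f w)]; linarith

lemma setOf_exists_lt_abs_sub_subset_iUnion {Ω : Type*} (G : F → Ω → ℝ) (hB : Monotone B)
    (hnet : ∀ k z, ∃ w ∈ B k, dist z w ≤ (2 : ℝ) ^ (-(k : ℤ))) (hτ : Summable τ) (hτ0 : 0 ≤ τ)
    (n : ℕ) :
    {ω | ∃ x ∈ ⋃ k, B k, ∃ y ∈ ⋃ k, B k, dist x y < (2 : ℝ) ^ (1 - (n : ℤ)) ∧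
        τ n + 2 * ∑' i, τ (n + i + 1) < |G x ω - G y ω|} ⊆
      ⋃ j, {ω | ∃ a ∈ B (n + j), ∃ b ∈ B (n + j),
        dist a b ≤ 4 * (2 : ℝ) ^ (-((n + j : ℕ) : ℤ)) ∧ τ (n + j) < |G a ω - G b ω|} := by
  rintro ω ⟨x, hx, y, hy, hxy, hbig⟩
  by_contra hω
  have hgood : ∀ k ≥ n, ∀ a ∈ B k, ∀ b ∈ B k,
      dist a b ≤ 4 * (2 : ℝ) ^ (-(k : ℤ)) → |G a ω - G b ω| ≤ τ k := by
    intro k hk a ha b hb hab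
    obtain ⟨j, rfl⟩ := Nat.exists_eq_add_of_le hk
    exact not_lt.mp fun h => hω (Set.mem_iUnion.mpr ⟨j, a, ha, b, hb, hab, h⟩)
  exact hbig.not_ge (abs_sub_le_of_dist_lt_dyadic hB hnet hτ hτ0 hgood hx hy hxy)

end Chaining

lemma hasSubgaussianMGF_id_gaussianReal {v c : ℝ≥0} (hvc : v ≤ c) :
    HasSubgaussianMGF id c (gaussianReal 0 v) where
  integrable_exp_mul := integrable_exp_mul_gaussianReal
  mgf_le t := by
    simp only [mgf_id_gaussianReal, zero_mul, zero_add]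
    gcongr

section Tail

variable {Ω : Type*} [MeasurableSpace Ω] {μ : Measure Ω} [IsFiniteMeasure μ] {X : Ω → ℝ}
  {c : ℝ≥0} {ε : ℝ}

lemma HasSubgaussianMGF.measure_lt_abs_le (h : HasSubgaussianMGF X c μ) (hε : 0 ≤ ε) :
    μ {ω | ε < |X ω|} ≤ ENNReal.ofReal (2 * Real.exp (-ε ^ 2 / (2 * c))) := by
  have hsplit : {ω | ε < |X ω|} ⊆ {ω | ε ≤ X ω} ∪ {ω | ε ≤ (-X) ω} :=
    fun ω (hω : ε < |X ω|) => by
      rcases lt_abs.mp hω with h | h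
      exacts [Or.inl h.le, Or.inr h.le]
  set b := Real.exp (-ε ^ 2 / (2 * c))
  calc μ {ω | ε < |X ω|} ≤ μ {ω | ε ≤ X ω} + μ {ω | ε ≤ (-X) ω} :=
        (measure_mono hsplit).trans (measure_union_le _ _)
    _ = ENNReal.ofReal (μ.real {ω | ε ≤ X ω}) + ENNReal.ofReal (μ.real {ω | ε ≤ (-X) ω}) := by
        rw [ofReal_measureReal, ofReal_measureReal]
    _ ≤ ENNReal.ofReal b + ENNReal.ofReal b := by
        gcongr
        exacts [h.measure_ge_le hε, h.neg.measure_ge_le hε]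
    _ = ENNReal.ofReal (2 * b) := by
        rw [two_mul, ENNReal.ofReal_add (by positivity) (by positivity)]

lemma measure_lt_abs_le_of_map_eq_gaussianReal {v : ℝ≥0} (hX : μ.map X = gaussianReal 0 v)
    (hvc : v ≤ c) (hε : 0 ≤ ε) :
    μ {ω | ε < |X ω|} ≤ ENNReal.ofReal (2 * Real.exp (-ε ^ 2 / (2 * c))) := by
  have hXm : AEMeasurable X μ := .of_map_ne_zero (by rw [hX]; exact IsProbabilityMeasure.ne_zero _)
  refine HasSubgaussianMGF.measure_lt_abs_le ?_ hε
  rw [← HasSubgaussianMGF.id_map_iff hXm, hX]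
  exact hasSubgaussianMGF_id_gaussianReal hvc

end Tail

lemma measure_exists_pair_le {ι Ω : Type*} [MeasurableSpace Ω] (μ : Measure Ω) (s : Finset ι)
    (p : ι → ι → Ω → Prop) {C : ℝ≥0∞} (h : ∀ a ∈ s, ∀ b ∈ s, μ {ω | p a b ω} ≤ C) :
    μ {ω | ∃ a ∈ s, ∃ b ∈ s, p a b ω} ≤ s.card ^ 2 * C := by
  have hunion : {ω | ∃ a ∈ s, ∃ b ∈ s, p a b ω} = ⋃ a ∈ s, ⋃ b ∈ s, {ω | p a b ω} := by
    ext ω; simp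
  calc μ {ω | ∃ a ∈ s, ∃ b ∈ s, p a b ω} ≤ ∑ a ∈ s, ∑ b ∈ s, μ {ω | p a b ω} := by
        rw [hunion]
        exact (measure_biUnion_finset_le _ _).trans
          (Finset.sum_le_sum fun a _ => measure_biUnion_finset_le _ _)
    _ ≤ ∑ a ∈ s, ∑ b ∈ s, C := Finset.sum_le_sum fun a ha => Finset.sum_le_sum (h a ha)
    _ = s.card ^ 2 * C := by simp [sq, mul_assoc]

section GaussianIncrements

variable {F Ω : Type*} [PseudoMetricSpace F] [MeasurableSpace Ω] {P : Measure Ω}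
  [IsFiniteMeasure P] {G : F → Ω → ℝ}

lemma measure_dist_le_and_lt_abs_sub_le
    (hG : ∀ x y, P.map (fun ω => G x ω - G y ω) = gaussianReal 0 (dist x y ^ 2).toNNReal)
    (a b : F) {δ t : ℝ} (ht : 0 ≤ t) :
    P {ω | dist a b ≤ δ ∧ t < |G a ω - G b ω|} ≤
      ENNReal.ofReal (2 * Real.exp (-t ^ 2 / (2 * δ ^ 2))) := by
  by_cases hab : dist a b ≤ δ
  · simp only [hab, true_and]
    have hvar : (dist a b ^ 2).toNNReal ≤ (δ ^ 2).toNNReal :=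
      Real.toNNReal_le_toNNReal (pow_le_pow_left₀ dist_nonneg hab 2)
    simpa [Real.coe_toNNReal _ (sq_nonneg δ)] using
      measure_lt_abs_le_of_map_eq_gaussianReal (hG a b) hvar ht
  · simp [hab]

lemma measure_exists_dyadic_increment_gt_le
    (hG : ∀ x y, P.map (fun ω => G x ω - G y ω) = gaussianReal 0 (dist x y ^ 2).toNNReal)
    {α : ℝ} (hα : 0 ≤ α) (B : Finset F) (k : ℕ) :
    P {ω | ∃ a ∈ B, ∃ b ∈ B, dist a b ≤ 4 * (2 : ℝ) ^ (-(k : ℤ)) ∧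
        8 * ((2 : ℝ) ^ (α - 1)) ^ k < |G a ω - G b ω|} ≤
      B.card ^ 2 * ENNReal.ofReal (Real.exp (-(2 : ℝ) ^ (2 * α * ((k : ℝ) - 3)))) :=
  measure_exists_pair_le P B _ fun a _ b _ =>
    (measure_dist_le_and_lt_abs_sub_le hG a b (by positivity)).trans
      (ENNReal.ofReal_le_ofReal (two_mul_exp_neg_sq_div_le hα k))

end GaussianIncrements

theorem stmt10 (α : ℝ) (hα : α ∈ Set.Ioo (0 : ℝ) 1) :
    ∃ c : ℝ, 0 < c ∧
      ∀ (F : Type u) (_ : MetricSpace F) (_ : CompactSpace F) (_ : Nonempty F)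
        (Ω : Type v) (_ : MeasurableSpace Ω) (P : Measure Ω) (_ : IsProbabilityMeasure P)
        (G : F → Ω → ℝ),
        (∀ x y : F, Measure.map (fun ω => G x ω - G y ω) P
            = gaussianReal 0 ((dist x y ^ 2).toNNReal)) →
        ∃ D : Set F, D.Countable ∧ Dense D ∧ ∀ n : ℕ,
          P {ω | ∃ x ∈ D, ∃ y ∈ D,
              dist x y < (2 : ℝ) ^ (1 - (n : ℤ)) ∧
              c * (2 : ℝ) ^ (-((1 - α) * (n : ℝ))) < |G x ω - G y ω|} ≤
            ∑' k : ℕ,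
              (((n + k : ℕ) + 1 : ℝ≥0∞) ^ 2) *
                ((coveringNumber (Set.univ : Set F)
                  ((2 : ℝ) ^ (-((n + k : ℕ) : ℤ))) : ℝ≥0∞)) ^ 2 *
                ENNReal.ofReal (Real.exp (-(2 : ℝ) ^ (2 * α * (((n + k : ℕ) : ℝ) - 3)))) := by
  obtain ⟨hα0, hα1⟩ := hα
  set r : ℝ := (2 : ℝ) ^ (α - 1)
  have hr0 : 0 < r := by positivity
  have hr1 : r < 1 := Real.rpow_lt_one_of_one_lt_of_neg one_lt_two (by linarith)
  have hc : ∀ n : ℕ, 8 * (1 + r) / (1 - r) * (2 : ℝ) ^ (-((1 - α) * (n : ℝ))) =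
      8 * r ^ n + 2 * ∑' i, 8 * r ^ (n + i + 1) := fun n => by
    rw [mul_pow_add_two_mul_tsum_mul_pow hr0.le hr1, two_rpow_neg_mul_natCast, neg_sub]
  refine ⟨8 * (1 + r) / (1 - r), by have := sub_pos.mpr hr1; positivity, ?_⟩
  intro F _ _ _ Ω _ P _ G hG
  obtain ⟨B, hBmono, hBnet, hBcard⟩ := exists_monotone_dyadic_nets F
  refine ⟨⋃ k, (B k : Set F), Set.countable_iUnion fun k => (B k).countable_toSet,
    dense_iUnion_of_dyadic_nets hBnet, fun n => ?_⟩
  simp only [hc]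
  refine (measure_mono (setOf_exists_lt_abs_sub_subset_iUnion G
    (fun k l hkl => Finset.coe_subset.mpr (hBmono hkl)) hBnet
    ((summable_geometric_of_lt_one hr0.le hr1).mul_left 8) (fun k => by positivity) n)).trans
    ((measure_iUnion_le _).trans (ENNReal.tsum_le_tsum fun j => ?_))
  refine (measure_exists_dyadic_increment_gt_le hG hα0.le (B (n + j)) (n + j)).trans ?_
  rw [← mul_pow]
  gcongr
  exact_mod_cast hBcard (n + j)
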